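/- Let B = (V,E) be a finite connected graph with an odd number n of vertices, let β > 0, and let μ be the free-boundary Ising Gibbs measure on {−1,+1}^V at inverse temperature β with zero external field. Let m_B(σ) = Σ_{x∈V} σ_x and let 𝟙_{m_B>0} be the indicator of positive magnetization. Then Var_μ(𝟙_{m_B>0}) = 1/4, the Dirichlet form satisfies D(𝟙_{m_B>0}) ≤ ((n+2)/2) μ(m_B = 1), and consequently the spectral gap satisfies c_gap(μ) ≤ 2(n+2) μ(m_B = 1). -/

import Mathlib

/- Common framework: Ising model with boundary conditions on (finite pieces of)
   locally finite graphs, heat-bath Glauber dynamics quantities. -/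

open Finset
open scoped Classical

noncomputable section

namespace IsingGlauber

/-- The real spin value of a Boolean spin: `true ↦ +1`, `false ↦ -1`. -/
def spin (b : Bool) : ℝ := if b then 1 else -1

variable {V : Type*}

/-- Neighbourhood finset of a vertex, from an explicit local finiteness witness. -/
def nbr (G : SimpleGraph V) (hlf : G.LocallyFinite) (x : V) : Finset V :=
  @SimpleGraph.neighborFinset V G x (hlf x)

/-- `G` is `(g,o)`-growing: every vertex `x` (say at distance `r` from `o`) has at
    least `g` more neighbours in level `r+1` than in the ball of radius `r`. -/
def IsGrowing (G : SimpleGraph V) (hlf : G.LocallyFinite) (g : ℕ) (o : V) : Prop :=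
  ∀ x : V,
    ((nbr G hlf x).filter fun z => G.dist o z ≤ G.dist o x).card + g ≤
      ((nbr G hlf x).filter fun z => G.dist o z = G.dist o x + 1).card

variable [DecidableEq V]

/-- External vertex boundary of a finite vertex set. -/
def vbd (G : SimpleGraph V) (hlf : G.LocallyFinite) (A : Finset V) : Finset V :=
  A.biUnion (fun a => nbr G hlf a) \ A

/-- Closure `A ∪ ∂_V A` of a finite vertex set. -/
def cl (G : SimpleGraph V) (hlf : G.LocallyFinite) (A : Finset V) : Finset V :=
  A ∪ vbd G hlf A

/-- Ising Hamiltonian (zero field) with boundary: `Σ_{(x,y) ∈ E(A ∪ ∂_V A)} σ_x σ_y`,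
    the sum over edges with both endpoints in `A ∪ ∂_V A` (each edge counted once). -/
def energyB (G : SimpleGraph V) (hlf : G.LocallyFinite) (A : Finset V) (σ : V → Bool) : ℝ :=
  (1 / 2) * ∑ x ∈ cl G hlf A, ∑ y ∈ (cl G hlf A).filter (fun y => G.Adj x y),
    spin (σ x) * spin (σ y)

/-- Free-boundary Ising Hamiltonian: `Σ_{(x,y) ∈ E(A)} σ_x σ_y`,
    the sum over edges with both endpoints in `A` (each edge counted once). -/
def energyF (G : SimpleGraph V) (A : Finset V) (σ : V → Bool) : ℝ :=
  (1 / 2) * ∑ x ∈ A, ∑ y ∈ A.filter (fun y => G.Adj x y), spin (σ x) * spin (σ y)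

/-- The configuration equal to `p` on `A` and to `η` off `A`. -/
def patch (A : Finset V) (η : V → Bool) (p : ∀ a ∈ A, Bool) : V → Bool :=
  fun v => if h : v ∈ A then p v h else η v

/-- Unnormalised Gibbs sum over configurations agreeing with `η` off `A`,
    with energy functional `E` (which should already include the factor `β`). -/
def wsum (E : (V → Bool) → ℝ) (A : Finset V) (η : V → Bool) (f : (V → Bool) → ℝ) : ℝ :=
  ∑ p ∈ A.pi (fun _ => (Finset.univ : Finset Bool)),
    Real.exp (E (patch A η p)) * f (patch A η p)

/-- Gibbs expectation of `f` for the measure on region `A` with boundary condition `η`. -/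
def gExp (E : (V → Bool) → ℝ) (A : Finset V) (η : V → Bool) (f : (V → Bool) → ℝ) : ℝ :=
  wsum E A η f / wsum E A η (fun _ => 1)

/-- Gibbs probability of an event. -/
def gProb (E : (V → Bool) → ℝ) (A : Finset V) (η : V → Bool) (P : (V → Bool) → Prop) : ℝ :=
  gExp E A η (fun σ => if P σ then 1 else 0)

/-- Gibbs variance of `f`. -/
def gVar (E : (V → Bool) → ℝ) (A : Finset V) (η : V → Bool) (f : (V → Bool) → ℝ) : ℝ :=
  gExp E A η (fun σ => f σ ^ 2) - gExp E A η f ^ 2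

/-- Dirichlet form of the heat-bath Glauber dynamics:
    `D(f) = Σ_{x ∈ A} μ(Var_x(f))`, where `Var_x(f)(σ)` is the variance of `f`
    under the one-site conditional Gibbs measure at `x` given `σ` elsewhere. -/
def dirich (E : (V → Bool) → ℝ) (A : Finset V) (η : V → Bool) (f : (V → Bool) → ℝ) : ℝ :=
  ∑ x ∈ A, gExp E A η (fun σ => gVar E {x} σ f)

/-- Spectral gap `c_gap(μ) = inf { D(f)/Var(f) : Var(f) ≠ 0 }`. -/
def cgap (E : (V → Bool) → ℝ) (A : Finset V) (η : V → Bool) : ℝ :=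
  sInf {r : ℝ | ∃ f : (V → Bool) → ℝ, gVar E A η f ≠ 0 ∧ r = dirich E A η f / gVar E A η f}

/-- The edge boundary of `C`, encoded as ordered pairs `(u,v)` with `u ∈ C`,
    `v ∉ C` and `u ~ v`; these pairs are in bijection with the boundary edges. -/
def obd (G : SimpleGraph V) (hlf : G.LocallyFinite) (C : Finset V) : Finset (V × V) :=
  (C ×ˢ C.biUnion (fun c => nbr G hlf c)).filter (fun p => G.Adj p.1 p.2 ∧ p.2 ∉ C)

end IsingGlauber

open IsingGlauber

/-!
The global spin flip `σ ↦ -σ` preserves the zero-field Ising weight and, `n` being odd, the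
magnetization `m` never vanishes, so the flip exchanges `{m > 0}` and `{m < 0}`: the indicator
`f = 𝟙_{m>0}` has mean `1/2` and variance `1/4`. Since `m` is odd and a single spin update
moves it by at most `2`, the one-site conditional variance of `f` vanishes unless `m = ±1`, and
it is always at most `1/4`. Summing over the `n` sites and using `μ(m = -1) = μ(m = 1)` gives
`D(f) ≤ (n/2) μ(m = 1)`, and `c_gap ≤ D(f) / Var(f) = 4 D(f)`.
-/

namespace IsingGlauber

variable {V : Type*}

section GibbsExpectation

variable [DecidableEq V] (E : (V → Bool) → ℝ) (A : Finset V) (η : V → Bool)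

lemma wsum_add (f g : (V → Bool) → ℝ) :
    wsum E A η (fun σ => f σ + g σ) = wsum E A η f + wsum E A η g := by
  simp only [wsum, mul_add, Finset.sum_add_distrib]

lemma wsum_const_mul (c : ℝ) (f : (V → Bool) → ℝ) :
    wsum E A η (fun σ => c * f σ) = c * wsum E A η f := by
  simp only [wsum, Finset.mul_sum, mul_left_comm]

lemma wsum_mono {f g : (V → Bool) → ℝ} (hfg : ∀ σ, f σ ≤ g σ) :
    wsum E A η f ≤ wsum E A η g :=
  Finset.sum_le_sum fun _ _ => mul_le_mul_of_nonneg_left (hfg _) (Real.exp_pos _).le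

lemma wsum_one_pos : 0 < wsum E A η (fun _ => 1) :=
  Finset.sum_pos (fun _ _ => by simpa using Real.exp_pos _)
    (Finset.pi_nonempty.2 fun _ _ => Finset.univ_nonempty)

lemma gExp_add (f g : (V → Bool) → ℝ) :
    gExp E A η (fun σ => f σ + g σ) = gExp E A η f + gExp E A η g := by
  simp only [gExp, wsum_add, add_div]

lemma gExp_const_mul (c : ℝ) (f : (V → Bool) → ℝ) :
    gExp E A η (fun σ => c * f σ) = c * gExp E A η f := by
  simp only [gExp, wsum_const_mul, mul_div_assoc]

lemma gExp_sub (f g : (V → Bool) → ℝ) :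
    gExp E A η (fun σ => f σ - g σ) = gExp E A η f - gExp E A η g := by
  have h := gExp_add E A η f fun σ => -1 * g σ
  rw [gExp_const_mul] at h
  simpa [sub_eq_add_neg] using h

lemma gExp_const (c : ℝ) : gExp E A η (fun _ => c) = c := by
  have h := wsum_const_mul E A η c (fun _ => 1)
  simp only [mul_one] at h
  rw [gExp, h, mul_div_cancel_right₀ _ (wsum_one_pos E A η).ne']

lemma gExp_mono {f g : (V → Bool) → ℝ} (hfg : ∀ σ, f σ ≤ g σ) :
    gExp E A η f ≤ gExp E A η g :=
  div_le_div_of_nonneg_right (wsum_mono E A η hfg) (wsum_one_pos E A η).le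

lemma gExp_nonneg {f : (V → Bool) → ℝ} (hf : ∀ σ, 0 ≤ f σ) : 0 ≤ gExp E A η f := by
  simpa [gExp_const] using gExp_mono E A η hf

lemma gProb_nonneg (P : (V → Bool) → Prop) : 0 ≤ gProb E A η P :=
  gExp_nonneg E A η fun _ => by split_ifs <;> norm_num

lemma gVar_eq_gExp_sq_sub (f : (V → Bool) → ℝ) :
    gVar E A η f = gExp E A η (fun σ => (f σ - gExp E A η f) ^ 2) := by
  set c := gExp E A η f
  have hexpand : (fun σ => (f σ - c) ^ 2) =
      fun σ => f σ ^ 2 + ((-2 * c) * f σ + c ^ 2) := by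
    funext σ; ring
  rw [gVar, hexpand, gExp_add, gExp_add, gExp_const_mul, gExp_const]
  ring

lemma gVar_nonneg (f : (V → Bool) → ℝ) : 0 ≤ gVar E A η f := by
  rw [gVar_eq_gExp_sq_sub]
  exact gExp_nonneg E A η fun _ => sq_nonneg _

lemma dirich_nonneg (f : (V → Bool) → ℝ) : 0 ≤ dirich E A η f :=
  Finset.sum_nonneg fun x _ => gExp_nonneg E A η fun σ => gVar_nonneg E {x} σ f

lemma cgap_le_div {f : (V → Bool) → ℝ} (hf : gVar E A η f ≠ 0) :
    cgap E A η ≤ dirich E A η f / gVar E A η f := by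
  refine csInf_le ⟨0, ?_⟩ ⟨f, hf, rfl⟩
  rintro _ ⟨g, -, rfl⟩
  exact div_nonneg (dirich_nonneg E A η g) (gVar_nonneg E A η g)

end GibbsExpectation

section FullVolume

variable [DecidableEq V] [Fintype V] (E : (V → Bool) → ℝ) (η : V → Bool)

lemma wsum_univ (f : (V → Bool) → ℝ) :
    wsum E Finset.univ η f = ∑ σ : V → Bool, Real.exp (E σ) * f σ := by
  refine Finset.sum_bij' (fun p _ => patch Finset.univ η p) (fun σ _ v _ => σ v)
    (fun _ _ => Finset.mem_univ _) (fun _ _ => by simp [Finset.mem_pi]) ?_ ?_ (fun _ _ => rfl)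
  · intro p _
    funext v hv
    simp [patch]
  · intro σ _
    funext v
    simp [patch]

lemma gExp_comp_perm (e : Equiv.Perm (V → Bool)) (he : ∀ σ, E (e σ) = E σ)
    (f : (V → Bool) → ℝ) : gExp E Finset.univ η (fun σ => f (e σ)) = gExp E Finset.univ η f := by
  have hsum : ∀ g : (V → Bool) → ℝ,
      ∑ σ, Real.exp (E σ) * g (e σ) = ∑ σ, Real.exp (E σ) * g σ := fun g =>
    Fintype.sum_equiv e _ _ fun σ => by rw [he]
  simp only [gExp, wsum_univ, hsum f]

end FullVolume

section SingleSite

variable [DecidableEq V] (E : (V → Bool) → ℝ) (x : V) (σ : V → Bool)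

lemma patch_singleton (p : ∀ a ∈ ({x} : Finset V), Bool) :
    patch {x} σ p = Function.update σ x (p x (Finset.mem_singleton_self x)) := by
  funext v
  by_cases h : v = x
  · subst h; simp [patch]
  · simp [patch, h]

lemma wsum_singleton (g : (V → Bool) → ℝ) :
    wsum E {x} σ g = ∑ b : Bool,
      Real.exp (E (Function.update σ x b)) * g (Function.update σ x b) := by
  refine Finset.sum_bij' (fun p _ => p x (Finset.mem_singleton_self x)) (fun b _ _ _ => b)
    (fun _ _ => Finset.mem_univ _) (fun _ _ => by simp [Finset.mem_pi]) ?_ (fun _ _ => rfl) ?_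
  · intro p _
    funext a ha
    obtain rfl := Finset.mem_singleton.mp ha
    rfl
  · intro p _
    rw [patch_singleton]

lemma gVar_singleton (g : (V → Bool) → ℝ) :
    gVar E {x} σ g =
      Real.exp (E (Function.update σ x true)) * Real.exp (E (Function.update σ x false)) *
        (g (Function.update σ x true) - g (Function.update σ x false)) ^ 2 /
        (Real.exp (E (Function.update σ x true)) +
          Real.exp (E (Function.update σ x false))) ^ 2 := by
  have hpos : 0 < Real.exp (E (Function.update σ x true)) +
      Real.exp (E (Function.update σ x false)) := by positivity
  simp only [gVar, gExp, wsum_singleton, Fintype.sum_bool]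
  field_simp
  ring

lemma gVar_singleton_le (g : (V → Bool) → ℝ) :
    gVar E {x} σ g ≤
      (g (Function.update σ x true) - g (Function.update σ x false)) ^ 2 / 4 := by
  rw [gVar_singleton, div_le_div_iff₀ (by positivity) (by norm_num)]
  have hgap := mul_nonneg (sq_nonneg (Real.exp (E (Function.update σ x true)) -
      Real.exp (E (Function.update σ x false))))
    (sq_nonneg (g (Function.update σ x true) - g (Function.update σ x false)))
  nlinarith

lemma gVar_singleton_eq_zero {g : (V → Bool) → ℝ}
    (hg : g (Function.update σ x true) = g (Function.update σ x false)) :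
    gVar E {x} σ g = 0 := by
  simp [gVar_singleton, hg]

end SingleSite

section Magnetization

def spinFlip : Equiv.Perm (V → Bool) := Equiv.piCongrRight fun _ => Equiv.boolNot

@[simp] lemma spinFlip_apply (σ : V → Bool) (v : V) : spinFlip σ v = !σ v := rfl

lemma spin_not (b : Bool) : spin (!b) = -spin b := by
  cases b <;> simp [spin]

lemma abs_spin (b : Bool) : |spin b| = 1 := by
  cases b <;> simp [spin]

lemma energyF_spinFlip (G : SimpleGraph V) (A : Finset V) (σ : V → Bool) :
    energyF G A (spinFlip σ) = energyF G A σ := by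
  simp only [energyF, spinFlip_apply, spin_not, neg_mul_neg]

variable [Fintype V]

def magnetization (σ : V → Bool) : ℝ := ∑ v, spin (σ v)

lemma magnetization_spinFlip (σ : V → Bool) :
    magnetization (spinFlip σ) = -magnetization σ := by
  simp only [magnetization, spinFlip_apply, spin_not, Finset.sum_neg_distrib]

lemma magnetization_update [DecidableEq V] (σ : V → Bool) (x : V) (b : Bool) :
    magnetization (Function.update σ x b) = magnetization σ - spin (σ x) + spin b := by
  simp only [magnetization]
  rw [← Finset.add_sum_erase _ _ (Finset.mem_univ x), ← Finset.add_sum_erase _ _ (Finset.mem_univ x),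
    Finset.sum_congr rfl fun v hv => by rw [Function.update_of_ne (Finset.ne_of_mem_erase hv)],
    Function.update_self]
  ring

lemma magnetization_eq_card_sub (σ : V → Bool) :
    magnetization σ = Fintype.card V - 2 * #{v | σ v = false} := by
  have hspin : ∀ v, spin (σ v) = 1 - 2 * if σ v = false then 1 else 0 := fun v => by
    cases σ v <;> norm_num [spin]
  simp only [magnetization, hspin, Finset.sum_sub_distrib, ← Finset.mul_sum, Finset.sum_boole]
  simp

variable (hodd : Odd (Fintype.card V))
include hodd

lemma exists_magnetization_eq_two_mul_add_one (σ : V → Bool) :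
    ∃ k : ℤ, magnetization σ = 2 * k + 1 := by
  obtain ⟨p, hp⟩ := hodd
  refine ⟨p - #{v | σ v = false}, ?_⟩
  rw [magnetization_eq_card_sub, hp]
  push_cast
  ring

lemma magnetization_ne_zero (σ : V → Bool) : magnetization σ ≠ 0 := by
  obtain ⟨k, hk⟩ := exists_magnetization_eq_two_mul_add_one hodd σ
  rw [hk]
  exact_mod_cast (by omega : 2 * k + 1 ≠ 0)

/-- Away from `m = ±1` the magnetization is an odd number of modulus at least `3`, and a
single spin update moves it by at most `2`, so its sign cannot change. -/
lemma pos_magnetization_update_iff [DecidableEq V] {σ : V → Bool}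
    (hm₁ : magnetization σ ≠ 1) (hm₂ : magnetization σ ≠ -1) (x : V) (b : Bool) :
    0 < magnetization (Function.update σ x b) ↔ 0 < magnetization σ := by
  obtain ⟨k, hk⟩ := exists_magnetization_eq_two_mul_add_one hodd σ
  have hk' : (1 : ℝ) ≤ k ∨ (k : ℝ) ≤ -2 := by
    have : k ≠ 0 := by rintro rfl; exact hm₁ (by simp [hk])
    have : k ≠ -1 := by rintro rfl; exact hm₂ (by rw [hk]; norm_num)
    rcases (by omega : 1 ≤ k ∨ k ≤ -2) with h | h
    exacts [Or.inl (by exact_mod_cast h), Or.inr (by exact_mod_cast h)]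
  have hmove : |magnetization (Function.update σ x b) - magnetization σ| ≤ 2 := by
    rw [magnetization_update, show ∀ a c d : ℝ, a - c + d - a = d + -c by intros; ring]
    calc |spin b + -spin (σ x)| ≤ |spin b| + |-spin (σ x)| := abs_add_le _ _
      _ = 2 := by rw [abs_neg, abs_spin, abs_spin]; norm_num
  rw [abs_le] at hmove
  constructor <;> intro h <;> rcases hk' with hk' | hk' <;> linarith

end Magnetization

section PositiveMagnetization

variable [Fintype V]

def posMagIndicator (σ : V → Bool) : ℝ := if 0 < magnetization σ then 1 else 0

lemma posMagIndicator_sq (σ : V → Bool) : posMagIndicator σ ^ 2 = posMagIndicator σ := by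
  unfold posMagIndicator; split_ifs <;> norm_num

lemma posMagIndicator_spinFlip (hodd : Odd (Fintype.card V)) (σ : V → Bool) :
    posMagIndicator (spinFlip σ) = 1 - posMagIndicator σ := by
  have hm := magnetization_ne_zero hodd σ
  unfold posMagIndicator
  rw [magnetization_spinFlip]
  rcases hm.lt_or_gt with h | h
  · rw [if_pos (neg_pos.2 h), if_neg h.not_gt]; norm_num
  · rw [if_neg (neg_neg_of_pos h).not_gt, if_pos h]; norm_num

variable [DecidableEq V] (hodd : Odd (Fintype.card V))
include hodd

lemma gVar_singleton_posMagIndicator_le (E : (V → Bool) → ℝ) (x : V) (σ : V → Bool) :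
    gVar E {x} σ posMagIndicator ≤
      ((if magnetization σ = 1 then 1 else 0) + (if magnetization σ = -1 then 1 else 0)) / 4 := by
  by_cases hm : magnetization σ = 1 ∨ magnetization σ = -1
  · have hjump : (posMagIndicator (Function.update σ x true) -
        posMagIndicator (Function.update σ x false)) ^ 2 ≤ 1 := by
      unfold posMagIndicator; split_ifs <;> norm_num
    have hrhs : (1 : ℝ) ≤ (if magnetization σ = 1 then 1 else 0) +
        (if magnetization σ = -1 then 1 else 0) := by
      rcases hm with hm | hm <;> rw [hm] <;> norm_num
    linarith [gVar_singleton_le E x σ posMagIndicator]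
  · obtain ⟨hm₁, hm₂⟩ := not_or.1 hm
    rw [gVar_singleton_eq_zero E x σ]
    · positivity
    · simp only [posMagIndicator, pos_magnetization_update_iff hodd hm₁ hm₂]

variable {E : (V → Bool) → ℝ} (hE : ∀ σ, E (spinFlip σ) = E σ) (η : V → Bool)
include hE

lemma gExp_posMagIndicator : gExp E Finset.univ η posMagIndicator = 1 / 2 := by
  have hflip := gExp_comp_perm E η spinFlip hE posMagIndicator
  simp only [posMagIndicator_spinFlip hodd, gExp_sub, gExp_const] at hflip
  linarith

lemma gVar_posMagIndicator : gVar E Finset.univ η posMagIndicator = 1 / 4 := by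
  rw [gVar, funext posMagIndicator_sq, gExp_posMagIndicator hodd hE]
  norm_num

lemma dirich_posMagIndicator_le :
    dirich E Finset.univ η posMagIndicator ≤
      Fintype.card V / 2 * gProb E Finset.univ η (fun σ => magnetization σ = 1) := by
  have hsymm : gProb E Finset.univ η (fun σ => magnetization σ = -1) =
      gProb E Finset.univ η (fun σ => magnetization σ = 1) := by
    rw [gProb, ← gExp_comp_perm E η spinFlip hE]
    simp only [magnetization_spinFlip, neg_inj, gProb]
  calc dirich E Finset.univ η posMagIndicator
      ≤ ∑ _x : V, gExp E Finset.univ η fun σ =>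
          ((if magnetization σ = 1 then 1 else 0) + (if magnetization σ = -1 then 1 else 0)) / 4 :=
        Finset.sum_le_sum fun x _ => gExp_mono E _ η (gVar_singleton_posMagIndicator_le hodd E x)
    _ = Fintype.card V / 2 * gProb E Finset.univ η (fun σ => magnetization σ = 1) := by
        simp only [div_eq_mul_inv _ (4 : ℝ), mul_comm _ (4 : ℝ)⁻¹, gExp_const_mul, gExp_add]
        rw [← gProb, ← gProb, hsymm, Finset.sum_const, Finset.card_univ, nsmul_eq_mul]
        ring

lemma cgap_le_two_mul_card_mul_gProb :
    cgap E Finset.univ η ≤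
      2 * Fintype.card V * gProb E Finset.univ η (fun σ => magnetization σ = 1) := by
  have hVar := gVar_posMagIndicator hodd hE η
  calc cgap E Finset.univ η
      ≤ dirich E Finset.univ η posMagIndicator / gVar E Finset.univ η posMagIndicator :=
        cgap_le_div E _ η (by rw [hVar]; norm_num)
    _ = 4 * dirich E Finset.univ η posMagIndicator := by rw [hVar]; ring
    _ ≤ _ := by linarith [dirich_posMagIndicator_le hodd hE η]

end PositiveMagnetization

end IsingGlauber

theorem statement16_general {V : Type} [Fintype V] [DecidableEq V]
    (G : SimpleGraph V)
    (n : ℕ) (hn : n = Fintype.card V) (hodd : Odd n)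
    (β : ℝ) :
    gVar (fun σ => β * energyF G Finset.univ σ) Finset.univ (fun _ => true)
        (fun σ => if 0 < ∑ v : V, spin (σ v) then 1 else 0) = 1 / 4 ∧
      dirich (fun σ => β * energyF G Finset.univ σ) Finset.univ (fun _ => true)
          (fun σ => if 0 < ∑ v : V, spin (σ v) then 1 else 0) ≤
        ((n : ℝ) + 2) / 2 *
          gProb (fun σ => β * energyF G Finset.univ σ) Finset.univ (fun _ => true)
            (fun σ => ∑ v : V, spin (σ v) = 1) ∧
      cgap (fun σ => β * energyF G Finset.univ σ) Finset.univ (fun _ => true) ≤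
        2 * ((n : ℝ) + 2) *
          gProb (fun σ => β * energyF G Finset.univ σ) Finset.univ (fun _ => true)
            (fun σ => ∑ v : V, spin (σ v) = 1) := by
  subst hn
  rw [show (fun σ : V → Bool => if 0 < ∑ v, spin (σ v) then (1 : ℝ) else 0) = posMagIndicator
      from rfl, show (fun σ : V → Bool => ∑ v, spin (σ v) = 1) = fun σ => magnetization σ = 1
      from rfl]
  generalize hEdef : (fun σ => β * energyF G Finset.univ σ) = E
  have hE : ∀ σ, E (spinFlip σ) = E σ := fun σ => by simp only [← hEdef, energyF_spinFlip]
  refine ⟨gVar_posMagIndicator hodd hE _, (dirich_posMagIndicator_le hodd hE _).trans ?_,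
    (cgap_le_two_mul_card_mul_gProb hodd hE _).trans ?_⟩ <;>
  exact mul_le_mul_of_nonneg_right (by linarith) (gProb_nonneg E _ _ _)

/-- for the free-boundary Ising measure on a finite connected graph
with an odd number `n` of vertices, the indicator of positive magnetization has
variance `1/4`, its Dirichlet form is at most `((n+2)/2) μ(m_B = 1)`, and hence the
spectral gap is at most `2(n+2) μ(m_B = 1)`. -/
theorem statement16 {V : Type} [Fintype V] [DecidableEq V]
    (G : SimpleGraph V) (hconn : G.Connected)
    (n : ℕ) (hn : n = Fintype.card V) (hodd : Odd n)
    (β : ℝ) (hβ : 0 < β) :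
    gVar (fun σ => β * energyF G Finset.univ σ) Finset.univ (fun _ => true)
        (fun σ => if 0 < ∑ v : V, spin (σ v) then 1 else 0) = 1 / 4 ∧
      dirich (fun σ => β * energyF G Finset.univ σ) Finset.univ (fun _ => true)
          (fun σ => if 0 < ∑ v : V, spin (σ v) then 1 else 0) ≤
        ((n : ℝ) + 2) / 2 *
          gProb (fun σ => β * energyF G Finset.univ σ) Finset.univ (fun _ => true)
            (fun σ => ∑ v : V, spin (σ v) = 1) ∧
      cgap (fun σ => β * energyF G Finset.univ σ) Finset.univ (fun _ => true) ≤
        2 * ((n : ℝ) + 2) *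
          gProb (fun σ => β * energyF G Finset.univ σ) Finset.univ (fun _ => true)
            (fun σ => ∑ v : V, spin (σ v) = 1) :=
  statement16_general G n hn hodd β
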